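/- Let G be a finite directed graph, let q ≥ 1, and let f0, f1 be probability distributions on V. Then V_q(f0, f1), the infimum of I_q(v, g) over all solutions (f, v, g) of the discrete transport equation with endpoints f0 and f1, equals the infimum of I_q(v, g) over all pairs (v, g) — v : [0,1] → (E → ℝ) continuous, g : [0,1] → (E → ℝ) a continuous path of probability distributions on E — satisfying the endpoint constraint Σ_{k∈E} ω_{x,k} ∫_0^1 v(t)_k g(t)_k dt = f1(x) − f0(x) for every x ∈ V. -/

import Mathlib

open scoped BigOperators
open Set

/-- A probability distribution on a finite set. -/
def IsProbDist {S : Type*} [Fintype S] (f : S → ℝ) : Prop :=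
  (∀ s, 0 ≤ f s) ∧ ∑ s, f s = 1

/-- A coupling of two distributions on a finite set. -/
def IsCoupling {V : Type*} [Fintype V] (f0 f1 : V → ℝ) (π : V → V → ℝ) : Prop :=
  (∀ x y, 0 ≤ π x y) ∧ (∀ x, ∑ y, π x y = f0 x) ∧ (∀ y, ∑ x, π x y = f1 y)

/-- Wasserstein-1 distance w.r.t. the shortest-path distance of a graph. -/
noncomputable def W1 {V : Type*} [Fintype V] (T : SimpleGraph V) (f0 f1 : V → ℝ) : ℝ :=
  sInf {c : ℝ | ∃ π : V → V → ℝ, IsCoupling f0 f1 π ∧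
    c = ∑ x, ∑ y, (T.dist x y : ℝ) * π x y}

/-- The tail of `f` past `x` in a tree rooted at `r`: the sum of `f y` over the
vertices `y` such that the unique path from `r` to `y` passes through `x`
(equivalently, `dist r x + dist x y = dist r y`). -/
noncomputable def tailSum {V : Type*} [Fintype V] (T : SimpleGraph V) (r : V)
    (f : V → ℝ) (x : V) : ℝ :=
  ∑ y, if T.dist r x + T.dist x y = T.dist r y then f y else 0

/-- The energy functional `I_q`. -/
noncomputable def Iq {E : Type*} [Fintype E] (q : ℝ) (v g : ℝ → E → ℝ) : ℝ :=
  (∫ t in (0:ℝ)..1, ∑ k, g t k * |v t k| ^ q) ^ (1 / q)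

/-- A finite directed graph on vertex type `V` with edge type `E`. -/
structure DiGraph (V E : Type*) where
  tail : E → V
  head : E → V
  ne : ∀ k, tail k ≠ head k

namespace DiGraph

variable {V E : Type*}

/-- The signed incidence matrix. -/
def incidence [DecidableEq V] (G : DiGraph V E) (x : V) (k : E) : ℝ :=
  if G.head k = x then 1 else if G.tail k = x then -1 else 0

/-- The underlying undirected simple graph. -/
def toSimpleGraph (G : DiGraph V E) : SimpleGraph V where
  Adj x y := x ≠ y ∧ ∃ k, (G.tail k = x ∧ G.head k = y) ∨ (G.tail k = y ∧ G.head k = x)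
  symm := by constructor; rintro x y ⟨hne, k, h⟩; exact ⟨hne.symm, k, h.symm⟩
  loopless := by constructor; rintro x ⟨hne, -⟩; exact hne rfl

/-- `G` is a rooted tree with root `r`: the underlying graph is a tree, and every
edge is oriented away from the root. -/
def IsRootedTree (G : DiGraph V E) (r : V) : Prop :=
  G.toSimpleGraph.IsTree ∧
  ∀ k, G.toSimpleGraph.dist r (G.head k) = G.toSimpleGraph.dist r (G.tail k) + 1

end DiGraph

/-- A solution `(f, v, g)` of the discrete transport equation on `[0,1]`. -/
structure TransportSolution {V E : Type*} [Fintype V] [Fintype E] [DecidableEq V]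
    (G : DiGraph V E) where
  f : ℝ → V → ℝ
  v : ℝ → E → ℝ
  g : ℝ → E → ℝ
  f_prob : ∀ t ∈ Icc (0:ℝ) 1, IsProbDist (f t)
  g_prob : ∀ t ∈ Icc (0:ℝ) 1, IsProbDist (g t)
  v_cont : ContinuousOn (fun t => v t) (Icc (0:ℝ) 1)
  g_cont : ContinuousOn (fun t => g t) (Icc (0:ℝ) 1)
  transport : ∀ x : V, ∀ t ∈ Icc (0:ℝ) 1,
    HasDerivWithinAt (fun s => f s x) (∑ k, G.incidence x k * v t k * g t k) (Icc (0:ℝ) 1) t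

/-!
Time-averaging reduces the general problem to stationary fluxes. For an admissible pair
`(v, g)` put `g₀ k = ∫ g_k` and `v₀ k = (∫ v_k g_k) / g₀ k`. The pair `(v₀, g₀)` has the same net
flux, it drives the linear interpolation `f t = f₀ + t (f₁ - f₀)`, and weighted Jensen for the
convex function `|·|^q` gives `g₀ k |v₀ k|^q ≤ ∫ g_k |v_k|^q`, so its cost is no larger.
Conversely the flux of any solution integrates to `f₁ - f₀` by the fundamental theorem of calculus.
-/

open MeasureTheory

theorem ConvexOn.le_add_rightDeriv_mul_sub {φ : ℝ → ℝ} (hφ : ConvexOn ℝ univ φ) (c x : ℝ) :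
    φ c + derivWithin φ (Ioi c) c * (x - c) ≤ φ x := by
  have hc : c ∈ interior (univ : Set ℝ) := by simp
  rcases lt_trichotomy x c with hxc | rfl | hcx
  · have h := (hφ.slope_le_leftDeriv_of_mem_interior (mem_univ x) hc hxc).trans
      (hφ.leftDeriv_le_rightDeriv_of_mem_interior hc)
    rw [slope_def_field, div_le_iff₀ (sub_pos.2 hxc)] at h
    linarith
  · simp
  · have h := hφ.rightDeriv_le_slope_of_mem_interior hc (mem_univ x) hcx
    rw [slope_def_field, le_div_iff₀ (sub_pos.2 hcx)] at h
    linarith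

theorem ConvexOn.integral_mul_map_div_le {α : Type*} [MeasurableSpace α] {μ : Measure α}
    {φ : ℝ → ℝ} (hφ : ConvexOn ℝ univ φ) {g v : α → ℝ} (hg0 : 0 ≤ᵐ[μ] g) (hg : Integrable g μ)
    (hvg : Integrable (fun t => v t * g t) μ) (hφv : Integrable (fun t => g t * φ (v t)) μ)
    (hne : ∫ t, g t ∂μ ≠ 0) :
    (∫ t, g t ∂μ) * φ ((∫ t, v t * g t ∂μ) / ∫ t, g t ∂μ) ≤ ∫ t, g t * φ (v t) ∂μ := by
  set c := (∫ t, v t * g t ∂μ) / ∫ t, g t ∂μ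
  set s := derivWithin φ (Ioi c) c
  have hcentered_int : Integrable (fun t => v t * g t - c * g t) μ := hvg.sub (hg.const_mul c)
  have hcentered : ∫ t, (v t * g t - c * g t) ∂μ = 0 := by
    rw [integral_sub hvg (hg.const_mul c), integral_const_mul, div_mul_cancel₀ _ hne, sub_self]
  calc (∫ t, g t ∂μ) * φ c = ∫ t, (φ c * g t + s * (v t * g t - c * g t)) ∂μ := by
        rw [integral_add (hg.const_mul _) (hcentered_int.const_mul s),
          integral_const_mul, integral_const_mul, hcentered]
        ring
    _ ≤ ∫ t, g t * φ (v t) ∂μ := by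
        refine integral_mono_ae ((hg.const_mul _).add (hcentered_int.const_mul s)) hφv ?_
        filter_upwards [hg0] with t ht
        have := mul_le_mul_of_nonneg_left (hφ.le_add_rightDeriv_mul_sub c (v t)) ht
        linear_combination this

theorem integral_mul_eq_zero_of_integral_eq_zero {α : Type*} [MeasurableSpace α]
    {μ : Measure α} {g : α → ℝ} (v : α → ℝ) (hg0 : 0 ≤ᵐ[μ] g) (hg : Integrable g μ)
    (hzero : ∫ t, g t ∂μ = 0) : ∫ t, v t * g t ∂μ = 0 := by
  have hg_ae : g =ᵐ[μ] 0 := (integral_eq_zero_iff_of_nonneg_ae hg0 hg).1 hzero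
  exact integral_eq_zero_of_ae (hg_ae.mono fun t ht => by simp [ht])

theorem convexOn_abs_rpow {q : ℝ} (hq : 1 ≤ q) : ConvexOn ℝ univ fun x : ℝ => |x| ^ q := by
  refine ⟨convex_univ, fun x _ y _ a b ha hb hab => ?_⟩
  calc |a • x + b • y| ^ q ≤ (a • |x| + b • |y|) ^ q := by
        refine Real.rpow_le_rpow (abs_nonneg _) ?_ (by linarith)
        simpa [abs_mul, abs_of_nonneg ha, abs_of_nonneg hb] using abs_add_le (a * x) (b * y)
    _ ≤ a • |x| ^ q + b • |y| ^ q :=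
        (convexOn_rpow hq).2 (abs_nonneg x) (abs_nonneg y) ha hb hab

theorem intervalIntegral_mul_abs_rpow_div_le {q : ℝ} (hq : 1 ≤ q) {a b : ℝ} (hab : a ≤ b)
    {g v : ℝ → ℝ} (hg : ContinuousOn g (Icc a b)) (hv : ContinuousOn v (Icc a b))
    (hg0 : ∀ t ∈ Icc a b, 0 ≤ g t) :
    (∫ t in a..b, g t) * |(∫ t in a..b, v t * g t) / ∫ t in a..b, g t| ^ q ≤
      ∫ t in a..b, g t * |v t| ^ q := by
  simp only [intervalIntegral.integral_of_le hab]
  have hint {u : ℝ → ℝ} (hu : ContinuousOn u (Icc a b)) : IntegrableOn u (Ioc a b) :=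
    hu.integrableOn_Icc.mono_set Ioc_subset_Icc_self
  have hvq : ContinuousOn (fun t => |v t| ^ q) (Icc a b) :=
    hv.abs.rpow_const fun _ _ => Or.inr (by linarith)
  rcases eq_or_ne (∫ t in Ioc a b, g t) 0 with h | h
  · rw [h, zero_mul]
    exact setIntegral_nonneg measurableSet_Ioc fun t ht =>
      mul_nonneg (hg0 t (Ioc_subset_Icc_self ht)) (by positivity)
  · have hg0' : 0 ≤ᵐ[volume.restrict (Ioc a b)] g := (ae_restrict_iff' measurableSet_Ioc).2
      (.of_forall fun t ht => hg0 t (Ioc_subset_Icc_self ht))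
    exact (convexOn_abs_rpow hq).integral_mul_map_div_le hg0' (hint hg) (hint (hv.mul hg))
      (hint (hg.mul hvq)) h

section TimeAverage

variable {E : Type*} [Fintype E]

theorem isProbDist_intervalIntegral {g : ℝ → E → ℝ} (hg : ContinuousOn g (Icc 0 1))
    (hgp : ∀ t ∈ Icc (0:ℝ) 1, IsProbDist (g t)) : IsProbDist fun k => ∫ t in (0:ℝ)..1, g t k := by
  refine ⟨fun k => intervalIntegral.integral_nonneg zero_le_one fun t ht => (hgp t ht).1 k, ?_⟩
  rw [← intervalIntegral.integral_finsetSum fun k _ =>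
      (continuousOn_pi.1 hg k).intervalIntegrable_of_Icc zero_le_one,
    intervalIntegral.integral_congr (g := fun _ => 1) fun t ht =>
      (hgp t (by rwa [uIcc_of_le zero_le_one] at ht)).2]
  simp

theorem Iq_const (q : ℝ) (v₀ g₀ : E → ℝ) :
    Iq q (fun _ => v₀) (fun _ => g₀) = (∑ k, g₀ k * |v₀ k| ^ q) ^ (1 / q) := by
  simp [Iq]

theorem exists_const_le_Iq {q : ℝ} (hq : 1 ≤ q) {v g : ℝ → E → ℝ}
    (hv : ContinuousOn v (Icc 0 1)) (hg : ContinuousOn g (Icc 0 1))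
    (hgp : ∀ t ∈ Icc (0:ℝ) 1, IsProbDist (g t)) :
    ∃ v₀ g₀ : E → ℝ, IsProbDist g₀ ∧ (∀ k, v₀ k * g₀ k = ∫ t in (0:ℝ)..1, v t k * g t k) ∧
      Iq q (fun _ => v₀) (fun _ => g₀) ≤ Iq q v g := by
  set g₀ : E → ℝ := fun k => ∫ t in (0:ℝ)..1, g t k
  set m : E → ℝ := fun k => ∫ t in (0:ℝ)..1, v t k * g t k
  have hvk := continuousOn_pi.1 hv
  have hgk := continuousOn_pi.1 hg
  have hg0 (k : E) : ∀ t ∈ Icc (0:ℝ) 1, 0 ≤ g t k := fun t ht => (hgp t ht).1 k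
  have hg₀ : IsProbDist g₀ := isProbDist_intervalIntegral hg hgp
  refine ⟨fun k => m k / g₀ k, g₀, hg₀, fun k => ?_, ?_⟩
  · rcases eq_or_ne (g₀ k) 0 with h | h
    · have h' : ∫ t in Ioc (0:ℝ) 1, g t k = 0 := by
        rw [← intervalIntegral.integral_of_le zero_le_one]
        exact h
      rw [h, mul_zero, eq_comm, intervalIntegral.integral_of_le zero_le_one]
      exact integral_mul_eq_zero_of_integral_eq_zero _
        ((ae_restrict_iff' measurableSet_Ioc).2
          (.of_forall fun t ht => hg0 k t (Ioc_subset_Icc_self ht)))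
        ((hgk k).integrableOn_Icc.mono_set Ioc_subset_Icc_self) h'
    · exact div_mul_cancel₀ _ h
  · have hcost_int (k : E) :
        IntervalIntegrable (fun t => g t k * |v t k| ^ q) volume 0 1 :=
      ((hgk k).mul ((hvk k).abs.rpow_const fun _ _ => Or.inr (by linarith)))
        |>.intervalIntegrable_of_Icc zero_le_one
    rw [Iq_const, Iq, intervalIntegral.integral_finsetSum fun k _ => hcost_int k]
    refine Real.rpow_le_rpow
      (Finset.sum_nonneg fun k _ => mul_nonneg (hg₀.1 k) (by positivity)) ?_ (by positivity)
    exact Finset.sum_le_sum fun k _ =>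
      intervalIntegral_mul_abs_rpow_div_le hq zero_le_one (hgk k) (hvk k) (hg0 k)

end TimeAverage

namespace TransportSolution

variable {V E : Type*} [Fintype V] [Fintype E] [DecidableEq V] {G : DiGraph V E}

theorem sum_incidence_mul_integral (sol : TransportSolution G) (x : V) :
    ∑ k, G.incidence x k * ∫ t in (0:ℝ)..1, sol.v t k * sol.g t k = sol.f 1 x - sol.f 0 x := by
  have hflux_cont (k : E) :
      ContinuousOn (fun t => G.incidence x k * sol.v t k * sol.g t k) (Icc 0 1) :=
    continuousOn_const.mul (continuousOn_pi.1 sol.v_cont k) |>.mul (continuousOn_pi.1 sol.g_cont k)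
  calc ∑ k, G.incidence x k * ∫ t in (0:ℝ)..1, sol.v t k * sol.g t k
      = ∑ k, ∫ t in (0:ℝ)..1, G.incidence x k * sol.v t k * sol.g t k := by
        simp_rw [mul_assoc, intervalIntegral.integral_const_mul]
    _ = ∫ t in (0:ℝ)..1, ∑ k, G.incidence x k * sol.v t k * sol.g t k :=
        (intervalIntegral.integral_finsetSum fun k _ =>
          (hflux_cont k).intervalIntegrable_of_Icc zero_le_one).symm
    _ = sol.f 1 x - sol.f 0 x :=
        intervalIntegral.integral_eq_sub_of_hasDeriv_right_of_le zero_le_one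
          (fun t ht => (sol.transport x t ht).continuousWithinAt)
          (fun t ht => ((sol.transport x t (Ioo_subset_Icc_self ht)).hasDerivAt
            (Icc_mem_nhds ht.1 ht.2)).hasDerivWithinAt)
          ((continuousOn_finsetSum _ fun k _ => hflux_cont k).intervalIntegrable_of_Icc
            zero_le_one)

def ofConst {f₀ f₁ : V → ℝ} (h₀ : IsProbDist f₀) (h₁ : IsProbDist f₁) (v₀ g₀ : E → ℝ)
    (hg₀ : IsProbDist g₀) (hflux : ∀ x, ∑ k, G.incidence x k * v₀ k * g₀ k = f₁ x - f₀ x) :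
    TransportSolution G where
  f t x := f₀ x + t * (f₁ x - f₀ x)
  v _ := v₀
  g _ := g₀
  f_prob t ht := ⟨fun x => by nlinarith [h₀.1 x, h₁.1 x, ht.1, ht.2],
    by simp [Finset.sum_add_distrib, ← Finset.mul_sum, h₀.2, h₁.2]⟩
  g_prob _ _ := hg₀
  v_cont := continuousOn_const
  g_cont := continuousOn_const
  transport x t _ := by
    rw [hflux x]
    simpa using (((hasDerivAt_id t).mul_const (f₁ x - f₀ x)).const_add (f₀ x)).hasDerivWithinAt

end TransportSolution

/-- the reduced formulation of `V_q`. -/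
theorem statement7 {V E : Type*} [Fintype V] [Fintype E] [DecidableEq V]
    (G : DiGraph V E) (q : ℝ) (hq : 1 ≤ q)
    (f0 f1 : V → ℝ) (h0 : IsProbDist f0) (h1 : IsProbDist f1) :
    sInf {c : ℝ | ∃ sol : TransportSolution G,
        sol.f 0 = f0 ∧ sol.f 1 = f1 ∧ c = Iq q sol.v sol.g} =
    sInf {c : ℝ | ∃ v g : ℝ → E → ℝ,
        ContinuousOn (fun t => v t) (Icc (0:ℝ) 1) ∧
        ContinuousOn (fun t => g t) (Icc (0:ℝ) 1) ∧
        (∀ t ∈ Icc (0:ℝ) 1, IsProbDist (g t)) ∧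
        (∀ x : V, ∑ k, G.incidence x k * (∫ t in (0:ℝ)..1, v t k * g t k)
          = f1 x - f0 x) ∧
        c = Iq q v g} := by
  apply csInf_eq_csInf_of_forall_exists_le
  · rintro _ ⟨sol, rfl, rfl, rfl⟩
    exact ⟨_, ⟨sol.v, sol.g, sol.v_cont, sol.g_cont, sol.g_prob,
      sol.sum_incidence_mul_integral, rfl⟩, le_rfl⟩
  · rintro _ ⟨v, g, hv, hg, hgp, hflux, rfl⟩
    obtain ⟨v₀, g₀, hg₀, hvg₀, hle⟩ := exists_const_le_Iq hq hv hg hgp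
    have hflux₀ (x : V) : ∑ k, G.incidence x k * v₀ k * g₀ k = f1 x - f0 x := by
      simp_rw [mul_assoc, hvg₀]
      exact hflux x
    exact ⟨_, ⟨.ofConst h0 h1 v₀ g₀ hg₀ hflux₀, funext fun x => by simp [TransportSolution.ofConst],
      funext fun x => by simp [TransportSolution.ofConst], rfl⟩, hle⟩
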